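/- Let r ≥ 0 and let ρ be a Borel probability measure on ℝ^d with support contained in B_r = [-r,r]^d. For every n ≥ 1 there exist finite Borel measures ρ_1,…,ρ_n on ℝ^d and Borel subsets A_1,…,A_n of B_r such that ρ = ρ_1 + ⋯ + ρ_n, and for every k = 1,…,n: |ρ_k| = 1/n, Supp(ρ_k) ⊆ A_k, and Diam(A_k) ≤ 4r·k^{-1/d}. -/

import Mathlib

open MeasureTheory Metric
open scoped ENNReal NNReal

/-!
At step `k` the remaining measure has mass `k / n` and is carried by `[-r, r]^d`. With
`m = ⌊k^(1/d)⌋` the grid of `m^d ≤ k` subcubes of side `2r/m` covers the cube, so by pigeonhole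
one subcube has mass `≥ 1/n`; a rescaled restriction to it of mass exactly `1/n` is split off.
Since `k^(1/d) < m + 1 ≤ 2m`, the side is at most `4r k^(-1/d)`.
-/

open Set

theorem Real.exists_fin_mem_Icc_subdivision {a b x : ℝ} {m : ℕ} (hm : 0 < m) (hx : x ∈ Icc a b) :
    ∃ j : Fin m, x ∈ Icc (a + j * ((b - a) / m)) (a + (j + 1) * ((b - a) / m)) := by
  classical
  have hlast : x ≤ a + ((m - 1 : ℕ) + 1) * ((b - a) / m) := by
    rw [Nat.cast_pred hm, sub_add_cancel, mul_div_cancel₀ _ (by positivity)]; linarith [hx.2]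
  have hP : ∃ j : ℕ, x ≤ a + (j + 1) * ((b - a) / m) := ⟨m - 1, hlast⟩
  obtain ⟨j, hjm, hj⟩ : ∃ j < m, x ∈ Icc (a + j * ((b - a) / m)) (a + (j + 1) * ((b - a) / m)) := by
    refine ⟨Nat.find hP, (Nat.find_min' hP hlast).trans_lt (Nat.sub_one_lt_of_lt hm), ?_,
      Nat.find_spec hP⟩
    rcases h : Nat.find hP with _ | i
    · simpa using hx.1
    · have := Nat.find_min hP (show i < Nat.find hP by omega)
      push_cast
      linarith
  exact ⟨⟨j, hjm⟩, hj⟩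

section Grid

variable {ι : Type*} [Fintype ι] {r : ℝ} {m : ℕ}

def gridCube (r : ℝ) (m : ℕ) (g : ι → Fin m) : Set (ι → ℝ) :=
  univ.pi fun i => Icc (-r + g i * (2 * r / m)) (-r + (g i + 1) * (2 * r / m))

theorem measurableSet_gridCube (g : ι → Fin m) : MeasurableSet (gridCube r m g) :=
  .univ_pi fun _ => measurableSet_Icc

theorem gridCube_subset_closedBall (hr : 0 ≤ r) (g : ι → Fin m) :
    gridCube r m g ⊆ closedBall 0 r := by
  rw [closedBall_pi _ hr]
  refine pi_mono fun i _ => ?_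
  have hm : (0 : ℝ) < m := by exact_mod_cast (g i).pos
  have hgi : (g i : ℝ) + 1 ≤ m := by exact_mod_cast (g i).is_lt
  rw [Pi.zero_apply, Real.closedBall_eq_Icc]
  refine Icc_subset_Icc (by simp; positivity) ?_
  calc -r + (g i + 1) * (2 * r / m) ≤ -r + m * (2 * r / m) := by gcongr
    _ = 0 + r := by field_simp; ring

theorem diam_gridCube_le (hr : 0 ≤ r) (g : ι → Fin m) : diam (gridCube r m g) ≤ 2 * r / m := by
  refine diam_le_of_forall_dist_le (by positivity) fun x hx y hy => ?_
  refine (dist_pi_le_iff (by positivity)).2 fun i => ?_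
  refine (Real.dist_le_of_mem_Icc (hx i trivial) (hy i trivial)).trans_eq ?_
  ring

theorem closedBall_subset_iUnion_gridCube (hr : 0 ≤ r) (hm : 0 < m) :
    closedBall (0 : ι → ℝ) r ⊆ ⋃ g, gridCube r m g := by
  intro x hx
  rw [closedBall_pi _ hr] at hx
  have hxi : ∀ i, x i ∈ Icc (-r) r := fun i => by
    simpa [Real.closedBall_eq_Icc] using hx i trivial
  choose g hg using fun i => Real.exists_fin_mem_Icc_subdivision hm (hxi i)
  exact mem_iUnion.2 ⟨g, fun i _ => by simpa [show r - -r = 2 * r by ring] using hg i⟩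

end Grid

theorem MeasureTheory.exists_measure_le_card_mul_of_subset_iUnion {α ι : Type*}
    [MeasurableSpace α] [Fintype ι] [Nonempty ι] (μ : Measure α) {s : Set α} {C : ι → Set α}
    (hs : s ⊆ ⋃ i, C i) : ∃ i, μ s ≤ Fintype.card ι * μ (C i) := by
  obtain ⟨i, -, hi⟩ := Finset.exists_max_image Finset.univ (fun i => μ (C i)) Finset.univ_nonempty
  refine ⟨i, ?_⟩
  calc μ s ≤ ∑ j, μ (C j) := (measure_mono hs).trans (measure_iUnion_fintype_le μ C)
    _ ≤ ∑ _j : ι, μ (C i) := Finset.sum_le_sum fun j _ => hi j (Finset.mem_univ j)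
    _ = Fintype.card ι * μ (C i) := by simp [Finset.sum_const, nsmul_eq_mul]

theorem Nat.floor_rpow_one_div_pow_le {x : ℝ} (hx : 1 ≤ x) (d : ℕ) :
    (⌊x ^ ((1 : ℝ) / d)⌋₊ : ℝ) ^ d ≤ x := by
  have hd : (1 : ℝ) / d * d ≤ 1 := by
    rcases eq_or_ne (d : ℝ) 0 with h | h <;> simp [h]
  calc (⌊x ^ ((1 : ℝ) / d)⌋₊ : ℝ) ^ d ≤ (x ^ ((1 : ℝ) / d)) ^ d :=
        pow_le_pow_left₀ (Nat.cast_nonneg _) (Nat.floor_le (by positivity)) d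
    _ = x ^ ((1 : ℝ) / d * d) := by rw [← Real.rpow_natCast, ← Real.rpow_mul (by positivity)]
    _ ≤ x ^ (1 : ℝ) := Real.rpow_le_rpow_of_exponent_le hx hd
    _ = x := Real.rpow_one x

theorem exists_subset_closedBall_diam_le_measure_ge {ι : Type*} [Fintype ι]
    (μ : Measure (ι → ℝ)) {r : ℝ} (hr : 0 ≤ r) (hsupp : μ (closedBall 0 r)ᶜ = 0) {k : ℕ}
    (hk : 1 ≤ k) :
    ∃ A, MeasurableSet A ∧ A ⊆ closedBall 0 r ∧
      diam A ≤ 4 * r * (k : ℝ) ^ (-(1 : ℝ) / Fintype.card ι) ∧ μ univ ≤ k * μ A := by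
  classical
  set y : ℝ := (k : ℝ) ^ ((1 : ℝ) / Fintype.card ι)
  set m := ⌊y⌋₊
  have hk1 : (1 : ℝ) ≤ k := by exact_mod_cast hk
  have hy1 : 1 ≤ y := Real.one_le_rpow hk1 (by positivity)
  have hm : 0 < m := Nat.floor_pos.2 hy1
  have hmk : m ^ Fintype.card ι ≤ k := by exact_mod_cast Nat.floor_rpow_one_div_pow_le hk1 _
  have : Nonempty (ι → Fin m) := ⟨fun _ => ⟨0, hm⟩⟩
  obtain ⟨g, hg⟩ :=
    exists_measure_le_card_mul_of_subset_iUnion μ (closedBall_subset_iUnion_gridCube hr hm)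
  refine ⟨gridCube r m g, measurableSet_gridCube g, gridCube_subset_closedBall hr g,
    (diam_gridCube_le hr g).trans ?_, ?_⟩
  · have hym : y ≤ 2 * m := by
      have : (1 : ℝ) ≤ m := by exact_mod_cast hm
      linarith [Nat.lt_floor_add_one y]
    calc 2 * r / m = 4 * r / (2 * m) := by field_simp; ring
      _ ≤ 4 * r / y := div_le_div_of_nonneg_left (by positivity) (by positivity) hym
      _ = 4 * r * (k : ℝ) ^ (-(1 : ℝ) / Fintype.card ι) := by
        rw [neg_div, Real.rpow_neg (by positivity), div_eq_mul_inv]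
  · calc μ univ ≤ μ (closedBall 0 r) := by
          simpa [hsupp] using measure_univ_le_add_compl (μ := μ) (closedBall 0 r)
      _ ≤ Fintype.card (ι → Fin m) * μ (gridCube r m g) := hg
      _ ≤ k * μ (gridCube r m g) := by
        rw [Fintype.card_fun, Fintype.card_fin]
        exact mul_le_mul_left (by exact_mod_cast hmk) _

theorem MeasureTheory.exists_le_measure_univ_eq_measure_compl_eq_zero {α : Type*}
    [MeasurableSpace α] (μ : Measure α) {A : Set α} (hA : MeasurableSet A) (hμA : μ A ≠ ∞)
    {c : ℝ≥0∞} (hc : c ≤ μ A) : ∃ ν ≤ μ, ν univ = c ∧ ν Aᶜ = 0 := by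
  refine ⟨(c / μ A) • μ.restrict A, fun s => ?_, ?_, ?_⟩
  · calc ((c / μ A) • μ.restrict A) s ≤ 1 * μ.restrict A s := by
          rw [Measure.smul_apply, smul_eq_mul]
          gcongr
          exact ENNReal.div_le_of_le_mul (by rwa [one_mul])
      _ ≤ μ s := by rw [one_mul]; exact Measure.restrict_le_self s
  · rcases eq_or_ne (μ A) 0 with h | h
    · simp [h, le_zero_iff.1 (h ▸ hc)]
    · simp [ENNReal.div_mul_cancel h hμA]
  · simp [Measure.restrict_apply hA.compl]

theorem exists_uniform_decomposition {ι : Type*} [Fintype ι] {r : ℝ} (hr : 0 ≤ r) (c : ℝ≥0∞)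
    (m : ℕ) (μ : Measure (ι → ℝ)) [IsFiniteMeasure μ] (hμ : μ univ = m * c)
    (hsupp : μ (closedBall 0 r)ᶜ = 0) :
    ∃ (ρs : Fin m → Measure (ι → ℝ)) (As : Fin m → Set (ι → ℝ)),
      μ = ∑ k, ρs k ∧
      ∀ k : Fin m,
        ρs k univ = c ∧
        ρs k (As k)ᶜ = 0 ∧
        As k ⊆ closedBall 0 r ∧
        diam (As k) ≤ 4 * r * (((k : ℕ) + 1 : ℝ)) ^ (-(1 : ℝ) / Fintype.card ι) := by
  induction m generalizing μ with
  | zero =>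
    refine ⟨Fin.elim0, Fin.elim0, ?_, fun k => k.elim0⟩
    simpa using hμ
  | succ m ih =>
    obtain ⟨A, hA, hAball, hAdiam, hμA⟩ :=
      exists_subset_closedBall_diam_le_measure_ge μ hr hsupp (k := m + 1) (by omega)
    have hc : c ≤ μ A := by
      rw [hμ] at hμA
      exact (ENNReal.mul_le_mul_iff_right (by simp) (ENNReal.natCast_ne_top _)).1 hμA
    obtain ⟨ν, hνμ, hν, hνA⟩ :=
      exists_le_measure_univ_eq_measure_compl_eq_zero μ hA (measure_ne_top μ A) hc
    have : IsFiniteMeasure ν := isFiniteMeasure_of_le μ hνμ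
    have hμν : (μ - ν) univ = m * c := by
      rw [Measure.sub_apply .univ hνμ, hμ, hν, Nat.cast_succ, add_one_mul]
      exact ENNReal.add_sub_cancel_right (hν ▸ measure_ne_top ν univ)
    have hμνsupp : (μ - ν) (closedBall 0 r)ᶜ = 0 :=
      nonpos_iff_eq_zero.1 (hsupp ▸ Measure.sub_le _)
    obtain ⟨ρs, As, hsum, hρs⟩ := ih (μ - ν) hμν hμνsupp
    refine ⟨Fin.lastCases ν ρs, Fin.lastCases A As, ?_, Fin.lastCases ?_ fun k => ?_⟩
    · rw [Fin.sum_univ_castSucc]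
      simp only [Fin.lastCases_castSucc, Fin.lastCases_last, ← hsum]
      exact (Measure.sub_add_cancel_of_le hνμ).symm
    · simpa using ⟨hν, hνA, hAball, by exact_mod_cast hAdiam⟩
    · simpa using hρs k

theorem uniform_decomposition_general (d n : ℕ) (hn : 1 ≤ n) (r : ℝ) (hr : 0 ≤ r)
    (ρ : Measure (Fin d → ℝ)) [IsProbabilityMeasure ρ]
    (hsupp : ρ (closedBall 0 r)ᶜ = 0) :
    ∃ (ρs : Fin n → Measure (Fin d → ℝ)) (As : Fin n → Set (Fin d → ℝ)),
      ρ = ∑ k, ρs k ∧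
      ∀ k : Fin n,
        ρs k Set.univ = (n : ℝ≥0∞)⁻¹ ∧
        ρs k (As k)ᶜ = 0 ∧
        As k ⊆ closedBall 0 r ∧
        Metric.diam (As k) ≤ 4 * r * (((k : ℕ) + 1 : ℝ)) ^ (-(1 : ℝ) / d) := by
  have hρ : ρ univ = n * (n : ℝ≥0∞)⁻¹ := by
    rw [measure_univ, ENNReal.mul_inv_cancel (by simp; omega) (ENNReal.natCast_ne_top n)]
  simpa using exists_uniform_decomposition hr _ n ρ hρ hsupp

theorem uniform_decomposition (d n : ℕ) (hd : 1 ≤ d) (hn : 1 ≤ n) (r : ℝ) (hr : 0 ≤ r)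
    (ρ : Measure (Fin d → ℝ)) [IsProbabilityMeasure ρ]
    (hsupp : ρ (closedBall 0 r)ᶜ = 0) :
    ∃ (ρs : Fin n → Measure (Fin d → ℝ)) (As : Fin n → Set (Fin d → ℝ)),
      ρ = ∑ k, ρs k ∧
      ∀ k : Fin n,
        ρs k Set.univ = (n : ℝ≥0∞)⁻¹ ∧
        ρs k (As k)ᶜ = 0 ∧
        As k ⊆ closedBall 0 r ∧
        Metric.diam (As k) ≤ 4 * r * (((k : ℕ) + 1 : ℝ)) ^ (-(1 : ℝ) / d) :=
  uniform_decomposition_general d n hn r hr ρ hsupp
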